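/- Let V(t) = δξ(t)^T δξ(t) where δξ solves δξ̇ = −(1/2)K_o J(q_f(t))^T J(q(t)) δξ, with ‖q(t)‖ = 1, ‖q_f(t) − q(t)‖ ≤ ε_q, K_o symmetric positive definite, and λ_o := λ_min(K_o) − λ_max(K_o)ε_q > 0. Then ‖δξ(t)‖ ≤ ‖δξ(0)‖·e^{−(λ_o/2)t} for all t ≥ 0. -/

import Mathlib

open Matrix

noncomputable def skew (u : Fin 3 → ℝ) : Matrix (Fin 3) (Fin 3) ℝ :=
  !![0, -u 2, u 1; u 2, 0, -u 0; -u 1, u 0, 0]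

noncomputable def Jq (x : Fin 4 → ℝ) : Matrix (Fin 4) (Fin 3) ℝ :=
  Matrix.of (Fin.cons (fun j => -x j.succ)
    (fun i => (x 0 • (1 : Matrix (Fin 3) (Fin 3) ℝ) + skew (fun k => x k.succ)) i))

/-!
`V = ‖δξ‖²` is a Lyapunov function. Writing `J(q_f) = J(q) + J(q_f - q)` and using
`J(x)ᵀ J(x) = ‖x‖² I`, the quadratic form `δξᵀ K J(q_f)ᵀ J(q) δξ` splits into
`δξᵀ K δξ ≥ λ_min ‖δξ‖²` plus a cross term which Cauchy–Schwarz bounds by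
`ε_q ‖K δξ‖ ‖δξ‖ ≤ λ_max ε_q ‖δξ‖²`. Hence `V' ≤ -λ_o V`, so `V(t) e^{λ_o t}` is nonincreasing,
and taking square roots gives the claimed decay.
-/

theorem Jq_eq (x : Fin 4 → ℝ) :
    Jq x = !![-x 1, -x 2, -x 3; x 0, -x 3, x 2; x 3, x 0, -x 1; -x 2, x 1, x 0] := by
  ext i j
  induction i using Fin.cases with
  | zero => fin_cases j <;> rfl
  | succ i =>
    simp only [Jq, of_apply, Fin.cons_succ]
    fin_cases i <;> fin_cases j <;> simp [skew, one_apply]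

theorem Jq_transpose_mul_self (x : Fin 4 → ℝ) : (Jq x)ᵀ * Jq x = (x ⬝ᵥ x) • 1 := by
  ext i j
  fin_cases i <;> fin_cases j <;>
    simp [Jq_eq, mul_apply, Fin.sum_univ_four, dotProduct, one_apply] <;> ring

theorem Jq_sub (x y : Fin 4 → ℝ) : Jq (x - y) = Jq x - Jq y := by
  ext i j
  fin_cases i <;> fin_cases j <;> simp [Jq_eq] <;> ring

theorem Jq_mulVec_dotProduct_Jq_mulVec (x : Fin 4 → ℝ) (u v : Fin 3 → ℝ) :
    (Jq x *ᵥ u) ⬝ᵥ (Jq x *ᵥ v) = (x ⬝ᵥ x) * (u ⬝ᵥ v) := by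
  rw [dotProduct_mulVec, ← mulVec_transpose, mulVec_mulVec, Jq_transpose_mul_self,
    smul_mulVec, one_mulVec, smul_dotProduct, smul_eq_mul]

theorem Matrix.dotProduct_self_nonneg {n R : Type*} [Fintype n] [Ring R] [LinearOrder R]
    [IsStrictOrderedRing R] (v : n → R) : 0 ≤ v ⬝ᵥ v :=
  Finset.sum_nonneg fun i _ => mul_self_nonneg (v i)

namespace Matrix.PosSemidef

variable {n : Type*} [Fintype n] {M : Matrix n n ℝ}

theorem dotProduct_mulVec_comm (hM : M.PosSemidef) (u v : n → ℝ) :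
    u ⬝ᵥ (M *ᵥ v) = v ⬝ᵥ (M *ᵥ u) := by
  have hMt : Mᵀ = M := (by simpa using hM.isHermitian : M.IsSymm).eq
  rw [dotProduct_mulVec, ← mulVec_transpose, hMt, dotProduct_comm]

theorem sq_dotProduct_mulVec_le (hM : M.PosSemidef) (u v : n → ℝ) :
    (u ⬝ᵥ (M *ᵥ v)) ^ 2 ≤ (u ⬝ᵥ (M *ᵥ u)) * (v ⬝ᵥ (M *ᵥ v)) := by
  have hquad : ∀ t : ℝ,
      0 ≤ (v ⬝ᵥ (M *ᵥ v)) * (t * t) + 2 * (u ⬝ᵥ (M *ᵥ v)) * t + u ⬝ᵥ (M *ᵥ u) := by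
    intro t
    have h := hM.dotProduct_mulVec_nonneg (u + t • v)
    simp only [star_trivial, mulVec_add, mulVec_smul, add_dotProduct, dotProduct_add,
      smul_dotProduct, dotProduct_smul, smul_eq_mul, hM.dotProduct_mulVec_comm v u] at h
    linarith
  have := discrim_le_zero hquad
  rw [discrim] at this
  linarith

theorem mulVec_dotProduct_mulVec_le {c : ℝ} (hM : M.PosSemidef)
    (hc : ∀ v, v ⬝ᵥ (M *ᵥ v) ≤ c * (v ⬝ᵥ v)) (v : n → ℝ) :
    (M *ᵥ v) ⬝ᵥ (M *ᵥ v) ≤ c ^ 2 * (v ⬝ᵥ v) := by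
  set w := M *ᵥ v
  have hv := hM.dotProduct_mulVec_nonneg v
  have hw := hM.dotProduct_mulVec_nonneg w
  simp only [star_trivial] at hv hw
  have hcs : (w ⬝ᵥ w) ^ 2 ≤ (c * (v ⬝ᵥ v)) * (c * (w ⬝ᵥ w)) := by
    calc (w ⬝ᵥ w) ^ 2 = (v ⬝ᵥ (M *ᵥ w)) ^ 2 := by rw [hM.dotProduct_mulVec_comm, dotProduct_comm]
      _ ≤ (v ⬝ᵥ (M *ᵥ v)) * (w ⬝ᵥ (M *ᵥ w)) := hM.sq_dotProduct_mulVec_le v w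
      _ ≤ (c * (v ⬝ᵥ v)) * (c * (w ⬝ᵥ w)) :=
        mul_le_mul (hc v) (hc w) hw (hv.trans (hc v))
  rcases (dotProduct_self_nonneg w).eq_or_lt with hw0 | hw0
  · rw [← hw0]
    exact mul_nonneg (sq_nonneg c) (dotProduct_self_nonneg v)
  · nlinarith

theorem nonneg_of_dotProduct_mulVec_le [Nonempty n] {c : ℝ} (hM : M.PosSemidef)
    (hc : ∀ v, v ⬝ᵥ (M *ᵥ v) ≤ c * (v ⬝ᵥ v)) : 0 ≤ c := by
  classical
  obtain ⟨i⟩ := ‹Nonempty n›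
  have h := (hM.dotProduct_mulVec_nonneg (Pi.single i 1)).trans (hc (Pi.single i 1))
  simpa using h

end Matrix.PosSemidef

theorem HasDerivAt.dotProduct_self {ι : Type*} [Fintype ι] {f : ℝ → ι → ℝ} {f' : ι → ℝ}
    {t : ℝ} (hf : HasDerivAt f f' t) :
    HasDerivAt (fun s => f s ⬝ᵥ f s) (2 * (f t ⬝ᵥ f')) t := by
  have hi i := hasDerivAt_pi.1 hf i
  refine (HasDerivAt.fun_sum (u := Finset.univ) fun i _ => (hi i).mul (hi i)).congr_deriv ?_
  simp only [dotProduct, Finset.mul_sum]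
  exact Finset.sum_congr rfl fun i _ => by ring

theorem le_mul_exp_of_hasDerivAt_le_neg_mul {V V' : ℝ → ℝ} {c : ℝ}
    (hV : ∀ t, 0 ≤ t → HasDerivAt V (V' t) t) (hV' : ∀ t, 0 < t → V' t ≤ -c * V t)
    {t : ℝ} (ht : 0 ≤ t) : V t ≤ V 0 * Real.exp (-c * t) := by
  have hg : ∀ s, 0 ≤ s → HasDerivAt (fun s => V s * Real.exp (c * s))
      ((V' s + c * V s) * Real.exp (c * s)) s := fun s hs =>
    ((hV s hs).mul (hasDerivAt_const_mul c).exp).congr_deriv (by ring)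
  have hanti : AntitoneOn (fun s => V s * Real.exp (c * s)) (Set.Ici 0) := by
    refine antitoneOn_of_hasDerivWithinAt_nonpos (convex_Ici 0)
      (fun s hs => (hg s hs).continuousAt.continuousWithinAt)
      (fun s hs => (hg s (interior_subset hs)).hasDerivWithinAt) fun s hs => ?_
    rw [interior_Ici] at hs
    nlinarith [hV' s hs, Real.exp_pos (c * s)]
  have := hanti Set.self_mem_Ici ht ht
  simp only [mul_zero, Real.exp_zero, mul_one] at this
  calc V t = V t * Real.exp (c * t) * Real.exp (-c * t) := by
        rw [mul_assoc, ← Real.exp_add, show c * t + -c * t = 0 by ring, Real.exp_zero, mul_one]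
    _ ≤ V 0 * Real.exp (-c * t) := by gcongr

theorem sq_Jq_mulVec_dotProduct_Jq_mulVec_le (x y : Fin 4 → ℝ) (u v : Fin 3 → ℝ) :
    ((Jq x *ᵥ u) ⬝ᵥ (Jq y *ᵥ v)) ^ 2 ≤ (x ⬝ᵥ x) * (u ⬝ᵥ u) * ((y ⬝ᵥ y) * (v ⬝ᵥ v)) := by
  simpa only [one_mulVec, Jq_mulVec_dotProduct_Jq_mulVec] using
    PosSemidef.one.sq_dotProduct_mulVec_le (Jq x *ᵥ u) (Jq y *ᵥ v)

theorem sub_mul_dotProduct_self_le_dotProduct_mulVec {K : Matrix (Fin 3) (Fin 3) ℝ}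
    (hK : K.PosSemidef) {lmin lmax ε : ℝ} (hmin : ∀ v, lmin * (v ⬝ᵥ v) ≤ v ⬝ᵥ (K *ᵥ v))
    (hmax : ∀ v, v ⬝ᵥ (K *ᵥ v) ≤ lmax * (v ⬝ᵥ v)) {x xf : Fin 4 → ℝ} (hx : x ⬝ᵥ x = 1)
    (hxf : √((xf - x) ⬝ᵥ (xf - x)) ≤ ε) (u : Fin 3 → ℝ) :
    (lmin - lmax * ε) * (u ⬝ᵥ u) ≤ u ⬝ᵥ ((K * (Jq xf)ᵀ * Jq x) *ᵥ u) := by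
  obtain ⟨hε, hδ⟩ := Real.sqrt_le_iff.1 hxf
  set w := K *ᵥ u
  set c := (Jq (xf - x) *ᵥ w) ⬝ᵥ (Jq x *ᵥ u)
  have hsplit : u ⬝ᵥ ((K * (Jq xf)ᵀ * Jq x) *ᵥ u) = u ⬝ᵥ (K *ᵥ u) + c := by
    have hJ : Jq xf = Jq x + Jq (xf - x) := by rw [Jq_sub]; abel
    rw [← mulVec_mulVec, ← mulVec_mulVec, hK.dotProduct_mulVec_comm, dotProduct_comm,
      dotProduct_mulVec, vecMul_transpose, hJ, add_mulVec, add_dotProduct,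
      Jq_mulVec_dotProduct_Jq_mulVec, hx, one_mul, add_left_inj]
    exact dotProduct_comm _ _
  have hcross : c ^ 2 ≤ (lmax * ε * (u ⬝ᵥ u)) ^ 2 := by
    calc c ^ 2 ≤ ((xf - x) ⬝ᵥ (xf - x)) * (w ⬝ᵥ w) * ((x ⬝ᵥ x) * (u ⬝ᵥ u)) :=
          sq_Jq_mulVec_dotProduct_Jq_mulVec_le _ _ _ _
      _ ≤ ε ^ 2 * (lmax ^ 2 * (u ⬝ᵥ u)) * (u ⬝ᵥ u) := by
          have hw := hK.mulVec_dotProduct_mulVec_le hmax u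
          have hw0 := dotProduct_self_nonneg w
          have hu0 := dotProduct_self_nonneg u
          rw [hx, one_mul]
          gcongr
      _ = (lmax * ε * (u ⬝ᵥ u)) ^ 2 := by ring
  have hlmax : 0 ≤ lmax := hK.nonneg_of_dotProduct_mulVec_le hmax
  have hc := (abs_le_of_sq_le_sq' hcross
    (mul_nonneg (mul_nonneg hlmax hε) (dotProduct_self_nonneg u))).1
  linarith [hmin u]

theorem stmt16_general (q qf : ℝ → Fin 4 → ℝ) (εq lammin lammax lamo : ℝ)
    (K : Matrix (Fin 3) (Fin 3) ℝ) (hKpd : K.PosDef)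
    (hmin : ∀ v : Fin 3 → ℝ, lammin * (v ⬝ᵥ v) ≤ v ⬝ᵥ (K *ᵥ v))
    (hmax : ∀ v : Fin 3 → ℝ, v ⬝ᵥ (K *ᵥ v) ≤ lammax * (v ⬝ᵥ v))
    (hq : ∀ t, 0 ≤ t → ∑ i, q t i ^ 2 = 1)
    (hqf : ∀ t, 0 ≤ t → Real.sqrt (∑ i, (qf t i - q t i) ^ 2) ≤ εq)
    (hlamo : lamo = lammin - lammax * εq)
    (ξ : ℝ → Fin 3 → ℝ)
    (hξ : ∀ t, 0 ≤ t →
      HasDerivAt ξ (-(1 / 2 : ℝ) • ((K * (Jq (qf t))ᵀ * Jq (q t)) *ᵥ ξ t)) t) :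
    ∀ t, 0 ≤ t →
      Real.sqrt (ξ t ⬝ᵥ ξ t) ≤ Real.sqrt (ξ 0 ⬝ᵥ ξ 0) * Real.exp (-(lamo / 2) * t) := by
  intro t ht
  have hdecay : ξ t ⬝ᵥ ξ t ≤ ξ 0 ⬝ᵥ ξ 0 * Real.exp (-lamo * t) := by
    refine le_mul_exp_of_hasDerivAt_le_neg_mul (fun s hs => (hξ s hs).dotProduct_self)
      (fun s hs => ?_) ht
    have hx : q s ⬝ᵥ q s = 1 := by simpa [dotProduct, sq] using hq s hs.le
    have hxf : √((qf s - q s) ⬝ᵥ (qf s - q s)) ≤ εq := by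
      simpa [dotProduct, sq] using hqf s hs.le
    have hrate :=
      sub_mul_dotProduct_self_le_dotProduct_mulVec hKpd.posSemidef hmin hmax hx hxf (ξ s)
    rw [dotProduct_smul, smul_eq_mul, hlamo]
    linarith
  calc √(ξ t ⬝ᵥ ξ t) ≤ √(ξ 0 ⬝ᵥ ξ 0 * Real.exp (-lamo * t)) := Real.sqrt_le_sqrt hdecay
    _ = √(ξ 0 ⬝ᵥ ξ 0) * Real.exp (-(lamo / 2) * t) := by
      rw [Real.sqrt_mul (dotProduct_self_nonneg _), ← Real.exp_half]
      ring_nf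

theorem stmt16 (q qf : ℝ → Fin 4 → ℝ) (εq lammin lammax lamo : ℝ) (hεq : 0 < εq)
    (K : Matrix (Fin 3) (Fin 3) ℝ) (hKs : K.IsSymm) (hKpd : K.PosDef)
    (hmin : ∀ v : Fin 3 → ℝ, lammin * (v ⬝ᵥ v) ≤ v ⬝ᵥ (K *ᵥ v))
    (hmax : ∀ v : Fin 3 → ℝ, v ⬝ᵥ (K *ᵥ v) ≤ lammax * (v ⬝ᵥ v))
    (hqcont : Continuous q) (hqfcont : Continuous qf)
    (hq : ∀ t, 0 ≤ t → ∑ i, q t i ^ 2 = 1)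
    (hqf : ∀ t, 0 ≤ t → Real.sqrt (∑ i, (qf t i - q t i) ^ 2) ≤ εq)
    (hlamo : lamo = lammin - lammax * εq) (hpos : 0 < lamo)
    (ξ : ℝ → Fin 3 → ℝ)
    (hξ : ∀ t, 0 ≤ t →
      HasDerivAt ξ (-(1 / 2 : ℝ) • ((K * (Jq (qf t))ᵀ * Jq (q t)) *ᵥ ξ t)) t) :
    ∀ t, 0 ≤ t →
      Real.sqrt (ξ t ⬝ᵥ ξ t) ≤ Real.sqrt (ξ 0 ⬝ᵥ ξ 0) * Real.exp (-(lamo / 2) * t) :=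
  stmt16_general q qf εq lammin lammax lamo K hKpd hmin hmax hq hqf hlamo ξ hξ
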